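/- arXiv:2101.02957 — 7 statements merged into one kernel-verified Lean document; each statement's English description precedes it below -/
import Mathlib

section
/- Let L_b be a Laplace random variable with mean 0 and scale parameter b > 0, let q ≥ 0, and Y_q = q + L_b. Then the bias of τ(Y_q), namely E[τ(Y_q)] − q, equals (b/2)·e^(−q/b), and the supremum over q ∈ [0, ∞) of |E[τ(Y_q)] − q| equals b/2. -/
open MeasureTheory Real Set Filter Topology

lemma bias_eq (b : ℝ) (hb : 0 < b) (q : ℝ) (hq : 0 ≤ q) :
    (∫ x : ℝ, max x 0 * (1 / (2 * b) * Real.exp (-|x - q| / b)))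
      = q + b / 2 * Real.exp (-q / b) := by
  have hbne : b ≠ 0 := ne_of_gt hb
  set c : ℝ := 1 / (2 * b) with hc
  -- rewrite integrand as an indicator of Ioi 0
  have h1 : (fun x : ℝ => max x 0 * (c * Real.exp (-|x - q| / b)))
      = Set.indicator (Ioi (0:ℝ)) (fun x => x * (c * Real.exp (-|x - q| / b))) := by
    funext x
    by_cases hx : 0 < x
    · simp [Set.indicator_of_mem, hx, max_eq_left hx.le]
    · push_neg at hx
      simp [Set.indicator_of_notMem, not_lt.2 hx, max_eq_right hx]
  -- continuity of the integrand
  have hcont : Continuous (fun x : ℝ => x * (c * Real.exp (-|x - q| / b))) :=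
    continuous_id.mul (continuous_const.mul (Real.continuous_exp.comp
      (((continuous_id.sub continuous_const).abs.neg).div_const b)))
  -- antiderivative on the right piece
  set g2 : ℝ → ℝ := fun x => -(c * ((b * x + b ^ 2) * Real.exp ((q - x) / b))) with hg2
  have hderiv2 : ∀ x : ℝ, HasDerivAt g2 (x * (c * Real.exp ((q - x) / b))) x := by
    intro x
    have he : HasDerivAt (fun x : ℝ => Real.exp ((q - x) / b))
        (Real.exp ((q - x) / b) * (-1 / b)) x := by
      have : HasDerivAt (fun x : ℝ => (q - x) / b) (-1 / b) x := by
        simpa using ((hasDerivAt_const x q).sub (hasDerivAt_id x)).div_const b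
      exact this.exp
    have hp : HasDerivAt (fun x : ℝ => b * x + b ^ 2) b x := by
      simpa using ((hasDerivAt_id x).const_mul b).add_const (b ^ 2)
    have := ((hp.mul he).const_mul c).neg
    refine this.congr_deriv ?_
    field_simp
    ring
  have htend2 : Tendsto g2 atTop (𝓝 0) := by
    have hcomp : Tendsto (fun x : ℝ => x / b) atTop atTop :=
      tendsto_id.atTop_div_const hb
    have h0 : Tendsto (fun y : ℝ => (y + 1) * Real.exp (-y)) atTop (𝓝 0) := by
      have := (Real.tendsto_pow_mul_exp_neg_atTop_nhds_zero 1).add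
        Real.tendsto_exp_neg_atTop_nhds_zero
      simpa [add_mul, pow_one] using this
    have h1' : Tendsto (fun x : ℝ => (x / b + 1) * Real.exp (-(x / b))) atTop (𝓝 0) :=
      h0.comp hcomp
    have h2' : Tendsto (fun x : ℝ =>
        (c * (b ^ 2 * Real.exp (q / b))) * ((x / b + 1) * Real.exp (-(x / b)))) atTop
        (𝓝 ((c * (b ^ 2 * Real.exp (q / b))) * 0)) := tendsto_const_nhds.mul h1'
    rw [mul_zero] at h2'
    have : Tendsto (fun x : ℝ =>
        -((c * (b ^ 2 * Real.exp (q / b))) * ((x / b + 1) * Real.exp (-(x / b))))) atTop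
        (𝓝 (-0)) := h2'.neg
    rw [neg_zero] at this
    refine this.congr fun x => ?_
    have hexp : Real.exp ((q - x) / b) = Real.exp (q / b) * Real.exp (-(x / b)) := by
      rw [← Real.exp_add]; congr 1; field_simp; ring
    rw [hg2]
    simp only [hexp]
    have hbx : b * x + b ^ 2 = b ^ 2 * (x / b + 1) := by field_simp
    rw [hbx]; ring
  have hpos2 : ∀ x ∈ Ioi q, 0 ≤ x * (c * Real.exp ((q - x) / b)) := by
    intro x hx
    have hx0 : 0 ≤ x := le_trans hq (le_of_lt hx)
    have hc0 : 0 ≤ c := by positivity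
    positivity
  -- integral over Ioi q
  have hint2 : ∫ x in Ioi q, x * (c * Real.exp ((q - x) / b)) = 0 - g2 q :=
    integral_Ioi_of_hasDerivAt_of_nonneg' (fun x _ => hderiv2 x) hpos2 htend2
  have hIoi_congr : EqOn (fun x : ℝ => x * (c * Real.exp (-|x - q| / b)))
      (fun x => x * (c * Real.exp ((q - x) / b))) (Ioi q) := by
    intro x hx
    have : |x - q| = x - q := abs_of_nonneg (by linarith [mem_Ioi.mp hx])
    simp only [this]
    ring_nf
  have hIntOn2 : IntegrableOn (fun x : ℝ => x * (c * Real.exp (-|x - q| / b))) (Ioi q) := by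
    have := integrableOn_Ioi_deriv_of_nonneg' (fun x _ => hderiv2 x) hpos2 htend2
    exact this.congr_fun (fun x hx => (hIoi_congr hx).symm) measurableSet_Ioi
  have hI2 : ∫ x in Ioi q, x * (c * Real.exp (-|x - q| / b))
      = c * (b * q + b ^ 2) := by
    rw [setIntegral_congr_fun measurableSet_Ioi hIoi_congr, hint2, hg2]
    simp [Real.exp_zero]
  -- integral over Ioc 0 q
  have hIoc_congr : EqOn (fun x : ℝ => x * (c * Real.exp (-|x - q| / b)))
      (fun x => x * (c * Real.exp ((x - q) / b))) (Ioc 0 q) := by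
    intro x hx
    have : |x - q| = -(x - q) := abs_of_nonpos (by linarith [(mem_Ioc.mp hx).2])
    simp only [this]
    ring_nf
  set g1 : ℝ → ℝ := fun x => c * ((b * x - b ^ 2) * Real.exp ((x - q) / b)) with hg1
  have hderiv1 : ∀ x : ℝ, HasDerivAt g1 (x * (c * Real.exp ((x - q) / b))) x := by
    intro x
    have he : HasDerivAt (fun x : ℝ => Real.exp ((x - q) / b))
        (Real.exp ((x - q) / b) * (1 / b)) x := by
      have : HasDerivAt (fun x : ℝ => (x - q) / b) (1 / b) x := by
        simpa using ((hasDerivAt_id x).sub_const q).div_const b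
      exact this.exp
    have hp : HasDerivAt (fun x : ℝ => b * x - b ^ 2) b x := by
      simpa using ((hasDerivAt_id x).const_mul b).sub_const (b ^ 2)
    have := (hp.mul he).const_mul c
    refine this.congr_deriv ?_
    field_simp
    ring
  have hI1 : ∫ x in Ioc 0 q, x * (c * Real.exp (-|x - q| / b))
      = c * (b * q - b ^ 2) + c * b ^ 2 * Real.exp (-q / b) := by
    rw [setIntegral_congr_fun measurableSet_Ioc hIoc_congr,
      ← intervalIntegral.integral_of_le hq]
    have hcont1 : Continuous fun x : ℝ => x * (c * Real.exp ((x - q) / b)) :=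
      continuous_id.mul (continuous_const.mul (Real.continuous_exp.comp
        ((continuous_id.sub continuous_const).div_const b)))
    rw [intervalIntegral.integral_eq_sub_of_hasDerivAt (fun x _ => hderiv1 x)
      (hcont1.intervalIntegrable 0 q)]
    have e1 : (q - q) / b = 0 := by rw [sub_self, zero_div]
    have e2 : (0 - q) / b = -q / b := by ring
    simp only [hg1, e1, e2, Real.exp_zero]
    ring
  -- combine
  have hIntOn1 : IntegrableOn (fun x : ℝ => x * (c * Real.exp (-|x - q| / b))) (Ioc 0 q) :=
    hcont.integrableOn_Ioc
  have hsplit : ∫ x in Ioi (0:ℝ), x * (c * Real.exp (-|x - q| / b))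
      = (∫ x in Ioc 0 q, x * (c * Real.exp (-|x - q| / b)))
        + ∫ x in Ioi q, x * (c * Real.exp (-|x - q| / b)) := by
    rw [← Set.Ioc_union_Ioi_eq_Ioi hq]
    exact setIntegral_union (Set.Ioc_disjoint_Ioi le_rfl) measurableSet_Ioi hIntOn1 hIntOn2
  calc (∫ x : ℝ, max x 0 * (c * Real.exp (-|x - q| / b)))
      = ∫ x in Ioi (0:ℝ), x * (c * Real.exp (-|x - q| / b)) := by
        rw [h1, integral_indicator measurableSet_Ioi]
    _ = (c * (b * q - b ^ 2) + c * b ^ 2 * Real.exp (-q / b)) + c * (b * q + b ^ 2) := by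
        rw [hsplit, hI1, hI2]
    _ = q + b / 2 * Real.exp (-q / b) := by
        rw [hc]; field_simp; ring

/-- The bias of the ramp-post-processed Laplace mechanism equals `(b/2)·e^{-q/b}` and the
maximal absolute bias over `q ≥ 0` equals `b/2`. -/
theorem stmt_1 (b : ℝ) (hb : 0 < b) :
    (∀ q : ℝ, 0 ≤ q →
      (∫ x : ℝ, max x 0 * (1 / (2 * b) * Real.exp (-|x - q| / b))) - q
        = b / 2 * Real.exp (-q / b)) ∧
    sSup {r : ℝ | ∃ q : ℝ, 0 ≤ q ∧
        r = |(∫ x : ℝ, max x 0 * (1 / (2 * b) * Real.exp (-|x - q| / b))) - q|}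
      = b / 2 := by
  have key : ∀ q : ℝ, 0 ≤ q →
      (∫ x : ℝ, max x 0 * (1 / (2 * b) * Real.exp (-|x - q| / b))) - q
        = b / 2 * Real.exp (-q / b) := by
    intro q hq
    rw [bias_eq b hb q hq]; ring
  have hb2 : (0:ℝ) ≤ b / 2 := by positivity
  have h00 : |b / 2 * Real.exp (-0 / b)| = b / 2 := by
    rw [neg_zero, zero_div, Real.exp_zero, mul_one, abs_of_nonneg hb2]
  have hub : ∀ r ∈ {r : ℝ | ∃ q : ℝ, 0 ≤ q ∧
      r = |(∫ x : ℝ, max x 0 * (1 / (2 * b) * Real.exp (-|x - q| / b))) - q|}, r ≤ b / 2 := by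
    rintro r ⟨q, hq, rfl⟩
    rw [key q hq, abs_of_nonneg (by positivity)]
    have h1 : Real.exp (-q / b) ≤ 1 := by
      rw [Real.exp_le_one_iff, neg_div]
      exact neg_nonpos.mpr (div_nonneg hq hb.le)
    calc b / 2 * Real.exp (-q / b) ≤ b / 2 * 1 := by
          exact mul_le_mul_of_nonneg_left h1 hb2
      _ = b / 2 := mul_one _
  have hmem : b / 2 ∈ {r : ℝ | ∃ q : ℝ, 0 ≤ q ∧
      r = |(∫ x : ℝ, max x 0 * (1 / (2 * b) * Real.exp (-|x - q| / b))) - q|} :=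
    ⟨0, le_rfl, by rw [key 0 le_rfl, h00]⟩
  exact ⟨key, le_antisymm (csSup_le ⟨b / 2, hmem⟩ hub) (le_csSup ⟨b / 2, hub⟩ hmem)⟩
end

section
/- Let Y_q = q + L_b be a Laplace random variable with mean q ≥ 0 and scale b > 0, and let Ŷ_q be the restriction of Y_q to [0, ∞), i.e., P(Ŷ_q ∈ A) = P(Y_q ∈ A)/P(Y_q ≥ 0) for Borel A ⊆ [0,∞). Then E[Ŷ_q] = q + (q + b)/(2·e^(q/b) − 1). -/
open MeasureTheory Real Set Filter Topology

section aux

variable {b q : ℝ}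

private lemma hdiv_tendsto (hb : 0 < b) :
    Tendsto (fun x : ℝ => (x - q) / b) atTop atTop :=
  (tendsto_atTop_add_const_right _ (-q) tendsto_id).atTop_div_const hb |>.congr
    (fun x => by simp only [id_eq]; ring)

private lemma hexp_deriv (hb : 0 < b) (x : ℝ) :
    HasDerivAt (fun y : ℝ => Real.exp (-(y - q) / b)) (Real.exp (-(x - q) / b) * (-1 / b)) x := by
  have h1 : HasDerivAt (fun y : ℝ => -(y - q) / b) (-1 / b) x :=
    (((hasDerivAt_id x).sub_const q).neg).div_const b
  exact (Real.hasDerivAt_exp _).comp x h1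

private lemma hexp_tendsto (hb : 0 < b) :
    Tendsto (fun x : ℝ => Real.exp (-(x - q) / b)) atTop (𝓝 0) := by
  have : Tendsto (fun x : ℝ => -((x - q) / b)) atTop atBot :=
    tendsto_neg_atTop_atBot.comp (hdiv_tendsto hb)
  have := Real.tendsto_exp_atBot.comp this
  refine this.congr fun x => by rw [Function.comp_apply, neg_div]

private lemma L1 (hb : 0 < b) :
    ∫ x in Ioi q, Real.exp (-(x - q) / b) = b := by
  have hderiv : ∀ x ∈ Ici q, HasDerivAt (fun y : ℝ => -b * Real.exp (-(y - q) / b))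
      (Real.exp (-(x - q) / b)) x := by
    intro x _
    have := (hexp_deriv (q := q) hb x).const_mul (-b)
    refine this.congr_deriv ?_
    field_simp
  have hpos : ∀ x ∈ Ioi q, 0 ≤ Real.exp (-(x - q) / b) := fun x _ => (Real.exp_pos _).le
  have htend : Tendsto (fun y : ℝ => -b * Real.exp (-(y - q) / b)) atTop (𝓝 0) := by
    simpa using (hexp_tendsto (q := q) hb).const_mul (-b)
  have := integral_Ioi_of_hasDerivAt_of_nonneg' hderiv hpos htend
  simp only [sub_self, neg_zero, zero_div, Real.exp_zero, mul_one] at this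
  rw [this]; ring

private lemma I1 (hb : 0 < b) :
    IntegrableOn (fun x : ℝ => Real.exp (-(x - q) / b)) (Ioi q) := by
  have hderiv : ∀ x ∈ Ici q, HasDerivAt (fun y : ℝ => -b * Real.exp (-(y - q) / b))
      (Real.exp (-(x - q) / b)) x := by
    intro x _
    have := (hexp_deriv (q := q) hb x).const_mul (-b)
    refine this.congr_deriv ?_
    field_simp
  have htend : Tendsto (fun y : ℝ => -b * Real.exp (-(y - q) / b)) atTop (𝓝 0) := by
    simpa using (hexp_tendsto (q := q) hb).const_mul (-b)
  exact integrableOn_Ioi_deriv_of_nonneg' hderiv (fun x _ => (Real.exp_pos _).le) htend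

private lemma xderiv (hb : 0 < b) (x : ℝ) :
    HasDerivAt (fun y : ℝ => -(b * y + b ^ 2) * Real.exp (-(y - q) / b))
      (x * Real.exp (-(x - q) / b)) x := by
  have h1 : HasDerivAt (fun y : ℝ => -(b * y + b ^ 2)) (-b) x := by
    have := ((hasDerivAt_id x).const_mul b).add_const (b ^ 2)
    exact this.neg.congr_deriv (by ring)
  have := h1.mul (hexp_deriv (q := q) hb x)
  refine this.congr_deriv ?_
  field_simp
  ring

private lemma xtendsto (hb : 0 < b) :
    Tendsto (fun y : ℝ => -(b * y + b ^ 2) * Real.exp (-(y - q) / b)) atTop (𝓝 0) := by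
  have h1 : Tendsto (fun x : ℝ => ((x - q) / b) * Real.exp (-((x - q) / b))) atTop (𝓝 0) := by
    have := (Real.tendsto_pow_mul_exp_neg_atTop_nhds_zero 1).comp (hdiv_tendsto (q := q) hb)
    simpa only [pow_one, Function.comp_def] using this
  have h2 := hexp_tendsto (q := q) hb
  have h3 := (h1.const_mul (-b ^ 2)).add (h2.const_mul (-(b * q + b ^ 2)))
  simp only [mul_zero, add_zero] at h3
  refine h3.congr fun x => ?_
  rw [neg_div]
  field_simp
  ring

private lemma L2 (hb : 0 < b) (hq : 0 ≤ q) :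
    ∫ x in Ioi q, x * Real.exp (-(x - q) / b) = b * q + b ^ 2 := by
  have hpos : ∀ x ∈ Ioi q, 0 ≤ x * Real.exp (-(x - q) / b) := fun x hx =>
    mul_nonneg (le_trans hq (le_of_lt hx)) (Real.exp_pos _).le
  have := integral_Ioi_of_hasDerivAt_of_nonneg' (fun x _ => xderiv (q := q) hb x) hpos
    (xtendsto (q := q) hb)
  simp only [sub_self, neg_zero, zero_div, Real.exp_zero, mul_one] at this
  rw [this]; ring

private lemma I2 (hb : 0 < b) (hq : 0 ≤ q) :
    IntegrableOn (fun x : ℝ => x * Real.exp (-(x - q) / b)) (Ioi q) := by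
  have hpos : ∀ x ∈ Ioi q, 0 ≤ x * Real.exp (-(x - q) / b) := fun x hx =>
    mul_nonneg (le_trans hq (le_of_lt hx)) (Real.exp_pos _).le
  exact integrableOn_Ioi_deriv_of_nonneg' (fun x _ => xderiv (q := q) hb x) hpos
    (xtendsto (q := q) hb)

private lemma hexp_deriv' (hb : 0 < b) (x : ℝ) :
    HasDerivAt (fun y : ℝ => Real.exp ((y - q) / b)) (Real.exp ((x - q) / b) * (1 / b)) x := by
  have h1 : HasDerivAt (fun y : ℝ => (y - q) / b) (1 / b) x := by
    simpa using ((hasDerivAt_id x).sub_const q).div_const b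
  exact (Real.hasDerivAt_exp _).comp x h1

private lemma L3 (hb : 0 < b) :
    ∫ x in (0:ℝ)..q, Real.exp ((x - q) / b) = b - b * Real.exp (-q / b) := by
  have hderiv : ∀ x ∈ uIcc (0:ℝ) q, HasDerivAt (fun y : ℝ => b * Real.exp ((y - q) / b))
      (Real.exp ((x - q) / b)) x := by
    intro x _
    have := (hexp_deriv' (q := q) hb x).const_mul b
    refine this.congr_deriv ?_
    field_simp
  have hint : IntervalIntegrable (fun x : ℝ => Real.exp ((x - q) / b)) volume 0 q :=
    (Real.continuous_exp.comp ((continuous_id.sub continuous_const).div_const b)).intervalIntegrable _ _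
  rw [intervalIntegral.integral_eq_sub_of_hasDerivAt hderiv hint]
  simp only [sub_self, zero_div, Real.exp_zero, mul_one, zero_sub, neg_div]
  try ring

private lemma L4 (hb : 0 < b) :
    ∫ x in (0:ℝ)..q, x * Real.exp ((x - q) / b)
      = b * q - b ^ 2 + b ^ 2 * Real.exp (-q / b) := by
  have hderiv : ∀ x ∈ uIcc (0:ℝ) q,
      HasDerivAt (fun y : ℝ => (b * y - b ^ 2) * Real.exp ((y - q) / b))
      (x * Real.exp ((x - q) / b)) x := by
    intro x _
    have h1 : HasDerivAt (fun y : ℝ => b * y - b ^ 2) b x := by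
      simpa using ((hasDerivAt_id x).const_mul b).sub_const (b ^ 2)
    have := h1.mul (hexp_deriv' (q := q) hb x)
    refine this.congr_deriv ?_
    field_simp
    ring
  have hint : IntervalIntegrable (fun x : ℝ => x * Real.exp ((x - q) / b)) volume 0 q :=
    (continuous_id.mul (Real.continuous_exp.comp
      ((continuous_id.sub continuous_const).div_const b))).intervalIntegrable _ _
  rw [intervalIntegral.integral_eq_sub_of_hasDerivAt hderiv hint]
  simp only [sub_self, zero_div, Real.exp_zero, mul_one, mul_zero, zero_sub, neg_div]
  ring

end aux

/-- Expectation of the Laplace mechanism restricted (truncated) to `[0,∞)`. -/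
theorem stmt_3 (b q : ℝ) (hb : 0 < b) (hq : 0 ≤ q) :
    (∫ x in Ici (0 : ℝ), x * (1 / (2 * b) * Real.exp (-|x - q| / b))) /
      (∫ x in Ici (0 : ℝ), 1 / (2 * b) * Real.exp (-|x - q| / b))
      = q + (q + b) / (2 * Real.exp (q / b) - 1) := by
  have hb' : b ≠ 0 := ne_of_gt hb
  -- abbreviations
  set c : ℝ := 1 / (2 * b) with hc
  have habs1 : ∀ x ∈ Ioc (0:ℝ) q, -|x - q| / b = (x - q) / b := by
    intro x hx
    rw [abs_of_nonpos (by linarith [hx.2])]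
    ring_nf
  have habs2 : ∀ x ∈ Ioi q, -|x - q| / b = -(x - q) / b := by
    intro x hx
    rw [abs_of_nonneg (by simp only [mem_Ioi] at hx; linarith)]
  -- split the numerator
  have hsplit : ∀ f : ℝ → ℝ, IntegrableOn f (Ioc 0 q) → IntegrableOn f (Ioi q) →
      ∫ x in Ici (0:ℝ), f x = (∫ x in Ioc (0:ℝ) q, f x) + ∫ x in Ioi q, f x := by
    intro f h1 h2
    rw [integral_Ici_eq_integral_Ioi, ← Ioc_union_Ioi_eq_Ioi hq,
      setIntegral_union (Ioc_disjoint_Ioi le_rfl) measurableSet_Ioi h1 h2]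
  have hcont1 : Continuous fun x : ℝ => c * Real.exp (-|x - q| / b) :=
    continuous_const.mul (Real.continuous_exp.comp
      (((continuous_id.sub continuous_const).abs.neg).div_const b))
  have hcont2 : Continuous fun x : ℝ => x * (c * Real.exp (-|x - q| / b)) :=
    continuous_id.mul hcont1
  have hI1 : IntegrableOn (fun x : ℝ => c * Real.exp (-|x - q| / b)) (Ioi q) := by
    refine IntegrableOn.congr_fun ((I1 (q := q) hb).const_mul c) ?_ measurableSet_Ioi
    intro x hx
    simp only
    rw [habs2 x hx]
  have hI2 : IntegrableOn (fun x : ℝ => x * (c * Real.exp (-|x - q| / b))) (Ioi q) := by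
    refine IntegrableOn.congr_fun ((I2 (q := q) hb hq).const_mul c) ?_ measurableSet_Ioi
    intro x hx
    simp only
    rw [habs2 x hx]; ring
  have hnum : ∫ x in Ici (0:ℝ), x * (c * Real.exp (-|x - q| / b))
      = c * (b * q - b ^ 2 + b ^ 2 * Real.exp (-q / b)) + c * (b * q + b ^ 2) := by
    rw [hsplit _ (hcont2.integrableOn_Ioc) hI2]
    have e1 : ∫ x in Ioc (0:ℝ) q, x * (c * Real.exp (-|x - q| / b))
        = c * (b * q - b ^ 2 + b ^ 2 * Real.exp (-q / b)) := by
      rw [setIntegral_congr_fun measurableSet_Ioc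
        (g := fun x => c * (x * Real.exp ((x - q) / b)))
        (fun x hx => by rw [habs1 x hx]; ring)]
      rw [MeasureTheory.integral_const_mul, ← intervalIntegral.integral_of_le hq, L4 hb]
    have e2 : ∫ x in Ioi q, x * (c * Real.exp (-|x - q| / b)) = c * (b * q + b ^ 2) := by
      rw [setIntegral_congr_fun measurableSet_Ioi
        (g := fun x => c * (x * Real.exp (-(x - q) / b)))
        (fun x hx => by rw [habs2 x hx]; ring)]
      rw [MeasureTheory.integral_const_mul, L2 hb hq]
    rw [e1, e2]
  have hden : ∫ x in Ici (0:ℝ), c * Real.exp (-|x - q| / b)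
      = c * (b - b * Real.exp (-q / b)) + c * b := by
    rw [hsplit _ (hcont1.integrableOn_Ioc) hI1]
    have e1 : ∫ x in Ioc (0:ℝ) q, c * Real.exp (-|x - q| / b)
        = c * (b - b * Real.exp (-q / b)) := by
      rw [setIntegral_congr_fun measurableSet_Ioc
        (g := fun x => c * Real.exp ((x - q) / b))
        (fun x hx => by rw [habs1 x hx])]
      rw [MeasureTheory.integral_const_mul, ← intervalIntegral.integral_of_le hq, L3 hb]
    have e2 : ∫ x in Ioi q, c * Real.exp (-|x - q| / b) = c * b := by
      rw [setIntegral_congr_fun measurableSet_Ioi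
        (g := fun x => c * Real.exp (-(x - q) / b))
        (fun x hx => by rw [habs2 x hx])]
      rw [MeasureTheory.integral_const_mul, L1 hb]
    rw [e1, e2]
  rw [hnum, hden]
  -- final algebra
  have hEpos : 0 < Real.exp (q / b) := Real.exp_pos _
  have hE1 : 1 ≤ Real.exp (q / b) := Real.one_le_exp (by positivity)
  have hEneg : Real.exp (-q / b) = (Real.exp (q / b))⁻¹ := by
    rw [neg_div, Real.exp_neg]
  have h2E : 2 * Real.exp (q / b) - 1 ≠ 0 := by nlinarith
  have hD : c * (b - b * Real.exp (-q / b)) + c * b ≠ 0 := by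
    rw [hEneg, hc]
    have : Real.exp (q / b) ≠ 0 := ne_of_gt hEpos
    field_simp
    intro h; rw [div_eq_zero_iff] at h; rcases h with h | h <;> nlinarith
  rw [div_eq_iff hD, hEneg, hc]
  have : Real.exp (q / b) ≠ 0 := ne_of_gt hEpos
  field_simp
  ring
end

section
/- For all q ≥ 0, ε > 0 and Δ > 0, the ratio B₂/B₁ of B₂ = (q + 2Δ/ε)/(2·e^(εq/(2Δ)) − 1) to B₁ = (Δ/(2ε))·e^(−εq/Δ) satisfies B₂/B₁ = (2·e^(εq/Δ)/(2·e^(εq/(2Δ)) − 1))·(εq/Δ + 2) > 2. -/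
open Real

/-- The ratio of the restriction bias `B₂` to the post-processing bias `B₁` exceeds 2. -/
theorem stmt_4 (q ε Δ : ℝ) (hq : 0 ≤ q) (hε : 0 < ε) (hΔ : 0 < Δ) :
    ((q + 2 * Δ / ε) / (2 * Real.exp (ε * q / (2 * Δ)) - 1)) /
        (Δ / (2 * ε) * Real.exp (-(ε * q) / Δ))
      = 2 * Real.exp (ε * q / Δ) / (2 * Real.exp (ε * q / (2 * Δ)) - 1) * (ε * q / Δ + 2) ∧
    2 < ((q + 2 * Δ / ε) / (2 * Real.exp (ε * q / (2 * Δ)) - 1)) /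
        (Δ / (2 * ε) * Real.exp (-(ε * q) / Δ)) := by
  have h1 : (1 : ℝ) ≤ Real.exp (ε * q / (2 * Δ)) := by
    apply Real.one_le_exp
    positivity
  have hd : 0 < 2 * Real.exp (ε * q / (2 * Δ)) - 1 := by linarith
  have hE : Real.exp (ε * q / (2 * Δ)) ≤ Real.exp (ε * q / Δ) := by
    apply Real.exp_le_exp.mpr
    rw [div_le_div_iff₀ (by positivity) hΔ]
    nlinarith [mul_nonneg (mul_nonneg hε.le hq) hΔ.le]
  have hs : 0 ≤ ε * q / Δ := by positivity
  have hne : Real.exp (ε * q / Δ) ≠ 0 := (Real.exp_pos _).ne'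
  have heq : ((q + 2 * Δ / ε) / (2 * Real.exp (ε * q / (2 * Δ)) - 1)) /
        (Δ / (2 * ε) * Real.exp (-(ε * q) / Δ))
      = 2 * Real.exp (ε * q / Δ) / (2 * Real.exp (ε * q / (2 * Δ)) - 1) * (ε * q / Δ + 2) := by
    rw [neg_div, Real.exp_neg]
    field_simp
  refine ⟨heq, ?_⟩
  rw [heq, div_mul_eq_mul_div, lt_div_iff₀ hd]
  nlinarith [Real.exp_pos (ε * q / Δ), mul_nonneg (Real.exp_pos (ε * q / Δ)).le hs]
end

section
/- Fix b > 0 and α ≥ 0. Define the bias function β_α(q) = E[τ_α(q + L_b)] − q for q ≥ 0, where L_b is Laplace with mean 0 and scale b. Then β_α is continuous and strictly decreasing on [0, ∞), with β_α(0) = (b/2)·e^{−α/b} and lim_{q→∞} β_α(q) = −α. -/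
open MeasureTheory Real Set Filter

lemma aux_tendsto_right (b c : ℝ) (hb : 0 < b) :
    Tendsto (fun t : ℝ => -((t + b) / 2 * Real.exp (-(t + c) / b))) atTop (nhds 0) := by
  have h : Tendsto (fun t : ℝ => (t + b) / 2 * Real.exp (-(t + c) / b)) atTop (nhds 0) := by
    have heq : (fun t : ℝ => (t + b) / 2 * Real.exp (-(t + c) / b))
        = fun t : ℝ => (t * Real.exp (-(1/b) * t) + b * Real.exp (-(1/b) * t))
            * (Real.exp (-c/b) / 2) := by
      funext t
      rw [show -(t + c) / b = (-(1/b) * t) + (-c/b) by field_simp; ring, Real.exp_add]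
      ring
    rw [heq]
    have hb' : 0 < 1/b := by positivity
    have h1 : Tendsto (fun t : ℝ => t * Real.exp (-(1/b) * t)) atTop (nhds 0) := by
      have := tendsto_rpow_mul_exp_neg_mul_atTop_nhds_zero 1 (1/b) hb'
      simpa using this
    have h2 : Tendsto (fun t : ℝ => b * Real.exp (-(1/b) * t)) atTop (nhds 0) := by
      have : Tendsto (fun t : ℝ => Real.exp (-(1/b) * t)) atTop (nhds 0) := by
        apply Real.tendsto_exp_atBot.comp
        exact (tendsto_id.const_mul_atTop_of_neg (by linarith)).comp tendsto_id
      simpa using this.const_mul b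
    simpa using (h1.add h2).mul_const (Real.exp (-c/b) / 2)
  simpa using h.neg

lemma aux_hasDerivAt_right (b c : ℝ) (hb : 0 < b) (t : ℝ) :
    HasDerivAt (fun t : ℝ => -((t + b) / 2 * Real.exp (-(t + c) / b)))
      (t * (1 / (2 * b) * Real.exp (-(t + c) / b))) t := by
  have h1 : HasDerivAt (fun t : ℝ => Real.exp (-(t + c) / b))
      (Real.exp (-(t + c) / b) * (-1 / b)) t := by
    have h : HasDerivAt (fun t : ℝ => -(t + c) / b) (-1 / b) t := by
      have := ((hasDerivAt_id t).add_const c).neg.div_const b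
      simpa using this
    exact h.exp
  have h2 : HasDerivAt (fun t : ℝ => (t + b) / 2) (1 / 2) t := by
    have := ((hasDerivAt_id t).add_const b).div_const 2
    simpa using this
  have := (h2.mul h1).neg
  refine this.congr_deriv ?_
  field_simp [hb.ne']
  ring

lemma aux_hasDerivAt_left (b c : ℝ) (hb : 0 < b) (t : ℝ) :
    HasDerivAt (fun t : ℝ => (t - b) / 2 * Real.exp ((t + c) / b))
      (t * (1 / (2 * b) * Real.exp ((t + c) / b))) t := by
  have h1 : HasDerivAt (fun t : ℝ => Real.exp ((t + c) / b))
      (Real.exp ((t + c) / b) * (1 / b)) t := by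
    have h : HasDerivAt (fun t : ℝ => (t + c) / b) (1 / b) t := by
      have := ((hasDerivAt_id t).add_const c).div_const b
      simpa using this
    exact h.exp
  have h2 : HasDerivAt (fun t : ℝ => (t - b) / 2) (1 / 2) t := by
    have := ((hasDerivAt_id t).sub_const b).div_const 2
    simpa using this
  have := h2.mul h1
  refine this.congr_deriv ?_
  field_simp [hb.ne']
  ring

lemma aux_integral (b c : ℝ) (hb : 0 < b) :
    ∫ t in Ioi (0:ℝ), t * (1 / (2 * b) * Real.exp (-|t + c| / b))
      = if 0 ≤ c then b / 2 * Real.exp (-c / b) else -c + b / 2 * Real.exp (c / b) := by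
  by_cases hc : 0 ≤ c
  · rw [if_pos hc]
    have hcongr : ∀ t ∈ Ioi (0:ℝ),
        t * (1 / (2 * b) * Real.exp (-|t + c| / b))
          = t * (1 / (2 * b) * Real.exp (-(t + c) / b)) := by
      intro t ht
      rw [abs_of_nonneg (by simp at ht; linarith)]
    rw [setIntegral_congr_fun measurableSet_Ioi hcongr]
    rw [integral_Ioi_of_hasDerivAt_of_nonneg'
      (fun t _ => aux_hasDerivAt_right b c hb t)
      (fun t ht => by
        have : (0:ℝ) < t := ht
        positivity)
      (aux_tendsto_right b c hb)]
    simp only [zero_sub, neg_neg, zero_add]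
  · push_neg at hc
    rw [if_neg (not_le.mpr hc)]
    set m := -c with hm
    have hm0 : 0 < m := by simp [hm]; linarith
    have hsplit : Ioi (0:ℝ) = Ioc 0 m ∪ Ioi m := (Ioc_union_Ioi_eq_Ioi hm0.le).symm
    have hcont : Continuous (fun t : ℝ => t * (1 / (2 * b) * Real.exp (-|t + c| / b))) := by
      fun_prop
    have hint1 : IntegrableOn (fun t : ℝ => t * (1 / (2 * b) * Real.exp (-|t + c| / b)))
        (Ioc 0 m) := hcont.integrableOn_Ioc
    have hint2 : IntegrableOn (fun t : ℝ => t * (1 / (2 * b) * Real.exp (-|t + c| / b)))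
        (Ioi m) := by
      apply IntegrableOn.congr_fun
        (integrableOn_Ioi_deriv_of_nonneg'
          (g := fun t : ℝ => -((t + b) / 2 * Real.exp (-(t + c) / b)))
          (fun t _ => aux_hasDerivAt_right b c hb t)
          (fun t ht => by
            have h1 : m < t := ht
            have : (0:ℝ) < t := lt_trans hm0 h1
            positivity)
          (aux_tendsto_right b c hb))
        ?_ measurableSet_Ioi
      intro t ht
      have h1 : m < t := ht
      have h2 : (0:ℝ) ≤ t + c := by simp only [hm] at h1; linarith
      simp [abs_of_nonneg h2]
    rw [hsplit, setIntegral_union (Ioc_disjoint_Ioi le_rfl) measurableSet_Ioi hint1 hint2]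
    have hI2 : ∫ t in Ioi m, t * (1 / (2 * b) * Real.exp (-|t + c| / b)) = (m + b) / 2 := by
      have hcongr : ∀ t ∈ Ioi m,
          t * (1 / (2 * b) * Real.exp (-|t + c| / b))
            = t * (1 / (2 * b) * Real.exp (-(t + c) / b)) := by
        intro t ht
        have h1 : m < t := ht
        have h2 : (0:ℝ) ≤ t + c := by simp only [hm] at h1; linarith
        rw [abs_of_nonneg h2]
      rw [setIntegral_congr_fun measurableSet_Ioi hcongr]
      rw [integral_Ioi_of_hasDerivAt_of_nonneg'
        (fun t _ => aux_hasDerivAt_right b c hb t)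
        (fun t ht => by
          have h1 : m < t := ht
          have : (0:ℝ) < t := lt_trans hm0 h1
          positivity)
        (aux_tendsto_right b c hb)]
      have : -(m + c) / b = 0 := by simp [hm]
      rw [this, Real.exp_zero]
      ring
    have hI1 : ∫ t in Ioc (0:ℝ) m, t * (1 / (2 * b) * Real.exp (-|t + c| / b))
        = (m - b) / 2 + b / 2 * Real.exp (c / b) := by
      rw [← intervalIntegral.integral_of_le hm0.le]
      have hcongr : ∀ t ∈ uIcc (0:ℝ) m,
          t * (1 / (2 * b) * Real.exp (-|t + c| / b))
            = t * (1 / (2 * b) * Real.exp ((t + c) / b)) := by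
        intro t ht
        rw [uIcc_of_le hm0.le] at ht
        have h1 : t ≤ m := ht.2
        have : t + c ≤ 0 := by simp only [hm] at h1; linarith
        rw [abs_of_nonpos this]
        ring_nf
      rw [intervalIntegral.integral_congr hcongr]
      rw [intervalIntegral.integral_eq_sub_of_hasDerivAt
        (fun t _ => aux_hasDerivAt_left b c hb t)
        (by apply Continuous.intervalIntegrable; fun_prop)]
      have h1 : (m + c) / b = 0 := by simp [hm]
      have h2 : ((0:ℝ) + c) / b = c / b := by ring_nf
      rw [h1, h2, Real.exp_zero]
      ring
    rw [hI1, hI2]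
    ring


lemma aux_beta_formula (b α : ℝ) (hb : 0 < b) (q : ℝ) :
    (∫ x : ℝ, max (x - α) 0 * (1 / (2 * b) * Real.exp (-|x - q| / b)))
      = b / 2 * Real.exp (-|q - α| / b) + max (q - α) 0 := by
  set g : ℝ → ℝ := fun x => (x - α) * (1 / (2 * b) * Real.exp (-|x - q| / b)) with hg
  have hind : ∀ x, max (x - α) 0 * (1 / (2 * b) * Real.exp (-|x - q| / b))
      = Set.indicator (Ioi α) g x := by
    intro x
    by_cases hx : x ∈ Ioi α
    · rw [Set.indicator_of_mem hx]
      have h1 : α < x := hx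
      rw [max_eq_left (by linarith)]
    · rw [Set.indicator_of_notMem hx]
      have h1 : x ≤ α := not_lt.mp (fun h => hx h)
      rw [max_eq_right (by linarith), zero_mul]
  rw [integral_congr_ae (Filter.Eventually.of_forall hind)]
  have hstep : ∫ x, Set.indicator (Ioi α) g x
      = ∫ t, Set.indicator (Ioi (0:ℝ)) (fun t => g (t + α)) t := by
    rw [← integral_add_right_eq_self (fun x => Set.indicator (Ioi α) g x) α]
    apply integral_congr_ae
    apply Filter.Eventually.of_forall
    intro t
    show (Ioi α).indicator g (t + α) = (Ioi (0:ℝ)).indicator (fun t => g (t + α)) t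
    by_cases ht : t ∈ Ioi (0:ℝ)
    · have h1 : (0:ℝ) < t := ht
      rw [Set.indicator_of_mem (by simp; linarith : t + α ∈ Ioi α),
        Set.indicator_of_mem ht]
    · have h1 : t ≤ 0 := not_lt.mp (fun h => ht h)
      rw [Set.indicator_of_notMem (by simp; linarith : t + α ∉ Ioi α),
        Set.indicator_of_notMem ht]
  rw [hstep, integral_indicator measurableSet_Ioi]
  have hcongr : ∀ t ∈ Ioi (0:ℝ), g (t + α)
      = t * (1 / (2 * b) * Real.exp (-|t + (α - q)| / b)) := by
    intro t _
    simp only [hg]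
    rw [show t + α - α = t by ring, show t + α - q = t + (α - q) by ring]
  rw [setIntegral_congr_fun measurableSet_Ioi hcongr, aux_integral b (α - q) hb]
  by_cases h : 0 ≤ α - q
  · rw [if_pos h, abs_of_nonpos (by linarith : q - α ≤ 0),
      max_eq_right (by linarith : q - α ≤ 0)]
    ring_nf
  · push_neg at h
    rw [if_neg (not_le.mpr h), abs_of_nonneg (by linarith : (0:ℝ) ≤ q - α),
      max_eq_left (by linarith : (0:ℝ) ≤ q - α)]
    ring_nf

/-- The bias function `β_α` of the translated-ramp post-processed Laplace mechanism is
continuous and strictly decreasing on `[0,∞)`, with `β_α(0) = (b/2)e^{-α/b}` and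
limit `-α` as `q → ∞`. -/
theorem stmt_9 (b α : ℝ) (hb : 0 < b) (hα : 0 ≤ α) (β : ℝ → ℝ)
    (hβ : ∀ q : ℝ, β q =
      (∫ x : ℝ, max (x - α) 0 * (1 / (2 * b) * Real.exp (-|x - q| / b))) - q) :
    ContinuousOn β (Ici 0) ∧ StrictAntiOn β (Ici 0) ∧
    β 0 = b / 2 * Real.exp (-α / b) ∧
    Tendsto β atTop (nhds (-α)) := by
  have hβ' : ∀ q : ℝ, β q = b / 2 * Real.exp (-|q - α| / b) + max (q - α) 0 - q := by
    intro q
    rw [hβ q, aux_beta_formula b α hb q]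
  have hβfun : β = fun q => b / 2 * Real.exp (-|q - α| / b) + max (q - α) 0 - q :=
    funext hβ'
  -- formula on the left piece
  have hleft : ∀ q ≤ α, β q = b / 2 * Real.exp ((q - α) / b) - q := by
    intro q hq
    rw [hβ' q, abs_of_nonpos (by linarith : q - α ≤ 0),
      max_eq_right (by linarith : q - α ≤ 0)]
    ring_nf
  have hright : ∀ q, α ≤ q → β q = b / 2 * Real.exp ((α - q) / b) - α := by
    intro q hq
    rw [hβ' q, abs_of_nonneg (by linarith : (0:ℝ) ≤ q - α),
      max_eq_left (by linarith : (0:ℝ) ≤ q - α)]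
    ring_nf
  refine ⟨?_, ?_, ?_, ?_⟩
  · rw [hβfun]
    apply Continuous.continuousOn
    fun_prop
  · -- strict anti
    have hA : StrictAntiOn β (Iic α) := by
      have hf : StrictAntiOn (fun q : ℝ => b / 2 * Real.exp ((q - α) / b) - q) (Iic α) := by
        apply strictAntiOn_of_deriv_neg (convex_Iic α)
        · apply Continuous.continuousOn; fun_prop
        · intro x hx
          rw [interior_Iic] at hx
          have hx' : x < α := hx
          have hD : HasDerivAt (fun q : ℝ => b / 2 * Real.exp ((q - α) / b) - q)
              (1 / 2 * Real.exp ((x - α) / b) - 1) x := by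
            have h1 : HasDerivAt (fun q : ℝ => (q - α) / b) (1 / b) x := by
              have := ((hasDerivAt_id x).sub_const α).div_const b
              simpa using this
            have h2 := (h1.exp.const_mul (b / 2)).sub (hasDerivAt_id x)
            refine h2.congr_deriv ?_
            field_simp [hb.ne']
          rw [hD.deriv]
          have : Real.exp ((x - α) / b) < 1 := by
            rw [Real.exp_lt_one_iff]
            have : x - α < 0 := by linarith
            exact div_neg_of_neg_of_pos this hb
          linarith
      intro x hx y hy hxy
      rw [hleft x hx, hleft y hy]
      exact hf hx hy hxy
    have hB : StrictAntiOn β (Ici α) := by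
      intro x hx y hy hxy
      rw [hright x hx, hright y hy]
      have h1 : Real.exp ((α - y) / b) < Real.exp ((α - x) / b) := by
        apply Real.exp_lt_exp.mpr
        apply (div_lt_div_iff_of_pos_right hb).mpr
        linarith
      have h2 : b / 2 * Real.exp ((α - y) / b) < b / 2 * Real.exp ((α - x) / b) :=
        mul_lt_mul_of_pos_left h1 (by positivity)
      linarith
    intro x hx y hy hxy
    rcases le_total y α with h | h
    · exact hA (le_of_lt (lt_of_lt_of_le hxy h)) h hxy
    · rcases le_total α x with h2 | h2
      · exact hB h2 h hxy
      · rcases eq_or_lt_of_le h2 with rfl | h3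
        · exact hB (Set.mem_Ici.mpr le_rfl) h hxy
        · have hy' : β y ≤ β α := by
            rcases eq_or_lt_of_le h with rfl | hy2
            · exact le_rfl
            · exact (hB (Set.mem_Ici.mpr le_rfl) hy2.le hy2).le
          exact lt_of_le_of_lt hy' (hA (Set.mem_Iic.mpr h3.le) Set.self_mem_Iic h3)
  · rw [hβ' 0, abs_of_nonpos (by linarith : (0:ℝ) - α ≤ 0),
      max_eq_right (by linarith : (0:ℝ) - α ≤ 0)]
    ring_nf
  · have hlim : Tendsto (fun q : ℝ => b / 2 * Real.exp ((α - q) / b) - α) atTop (nhds (-α)) := by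
      have h1 : Tendsto (fun q : ℝ => (α - q) / b) atTop atBot := by
        apply Tendsto.atBot_div_const hb
        exact (tendsto_atBot_add_const_left atTop α tendsto_neg_atTop_atBot).congr (fun q => by ring)
      have h2 := (Real.tendsto_exp_atBot.comp h1).const_mul (b / 2)
      have := h2.sub_const α
      simpa using this
    apply hlim.congr'
    filter_upwards [Ici_mem_atTop α] with q hq
    exact (hright q hq).symm
end

section
/- Fix b > 0. For α ≥ 0, define B(α) = sup{|E[τ_α(q + L_b)] − q| : q ≥ 0}, where L_b is Laplace with mean 0 and scale b and τ_α(x) = max(x − α, 0). Then B(α) = max{(b/2)·e^{−α/b}, α}. -/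
open MeasureTheory Real Set Filter

private lemma hd_aux (c d k s : ℝ) (x : ℝ) :
    HasDerivAt (fun x : ℝ => (c * x + d) * Real.exp (k * (x - s)))
      ((c + (c * x + d) * k) * Real.exp (k * (x - s))) x := by
  have h1 : HasDerivAt (fun x : ℝ => k * (x - s)) k x := by
    simpa using ((hasDerivAt_id x).sub_const s).const_mul k
  have h2 := h1.exp
  have h3 : HasDerivAt (fun x : ℝ => c * x + d) c x := by
    simpa using ((hasDerivAt_id x).const_mul c).add_const d
  have h4 : HasDerivAt (fun x : ℝ => (c * x + d) * Real.exp (k * (x - s))) _ x := h3.mul h2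
  convert h4 using 1
  ring

private lemma lap_tendsto (b C A B : ℝ) (hb : 0 < b) :
    Tendsto (fun x : ℝ => (A * x + B) * Real.exp ((-1/b) * (x - C))) atTop (nhds 0) := by
  have h1 : Tendsto (fun x : ℝ => (x - C) / b) atTop atTop := by
    apply Tendsto.atTop_div_const hb
    exact tendsto_atTop_add_const_right atTop (-C) tendsto_id |>.congr (fun x => by simp [sub_eq_add_neg, add_comm])
  have h2 : Tendsto (fun y : ℝ => (A * b) * (y ^ 1 * Real.exp (-y)) + (A * C + B) * Real.exp (-y))
      atTop (nhds ((A * b) * 0 + (A * C + B) * 0)) :=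
    (((Real.tendsto_pow_mul_exp_neg_atTop_nhds_zero 1).const_mul (A * b)).add
      ((Real.tendsto_exp_neg_atTop_nhds_zero).const_mul (A * C + B)))
  rw [mul_zero, mul_zero, add_zero] at h2
  have h3 := h2.comp h1
  refine h3.congr (fun x => ?_)
  have hbne : b ≠ 0 := ne_of_gt hb
  simp only [Function.comp]
  rw [pow_one]
  have he : -((x - C) / b) = (-1/b) * (x - C) := by ring
  rw [he]
  field_simp
  ring

private lemma tail_integral (b α q t : ℝ) (hb : 0 < b) (hαt : α ≤ t) (hqt : q ≤ t) :
    IntegrableOn (fun x : ℝ => max (x - α) 0 * (1 / (2 * b) * Real.exp (-|x - q| / b))) (Ioi t)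
    ∧ (∫ x in Ioi t, max (x - α) 0 * (1 / (2 * b) * Real.exp (-|x - q| / b)))
      = 1 / (2 * b) * (b * (t - α) + b ^ 2) * Real.exp ((-1/b) * (t - q)) := by
  have hbne : b ≠ 0 := ne_of_gt hb
  set c : ℝ := -1/2 with hcdef
  set d : ℝ := α / 2 - b / 2 with hddef
  have hderiv : ∀ x ∈ Ici t, HasDerivAt (fun x : ℝ => (c * x + d) * Real.exp ((-1/b) * (x - q)))
      ((c + (c * x + d) * (-1/b)) * Real.exp ((-1/b) * (x - q))) x :=
    fun x _ => hd_aux c d (-1/b) q x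
  have hval : ∀ x : ℝ, (c + (c * x + d) * (-1/b)) = (x - α) / (2 * b) := by
    intro x
    rw [hcdef, hddef]
    field_simp
    ring
  have hpos : ∀ x ∈ Ioi t, 0 ≤ (c + (c * x + d) * (-1/b)) * Real.exp ((-1/b) * (x - q)) := by
    intro x hx
    rw [hval]
    have hx' : α ≤ x := hαt.trans (le_of_lt hx)
    have h1 : 0 ≤ (x - α) / (2 * b) := div_nonneg (sub_nonneg.2 hx') (by positivity)
    exact mul_nonneg h1 (Real.exp_pos _).le
  have htend := lap_tendsto b q c d hb
  have hint := integrableOn_Ioi_deriv_of_nonneg' hderiv hpos htend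
  have heq := integral_Ioi_of_hasDerivAt_of_nonneg' hderiv hpos htend
  have hcongr : EqOn (fun x : ℝ => (c + (c * x + d) * (-1/b)) * Real.exp ((-1/b) * (x - q)))
      (fun x : ℝ => max (x - α) 0 * (1 / (2 * b) * Real.exp (-|x - q| / b))) (Ioi t) := by
    intro x hx
    have hx1 : α ≤ x := hαt.trans (le_of_lt hx)
    have hx2 : q ≤ x := hqt.trans (le_of_lt hx)
    simp only
    rw [hval, max_eq_left (sub_nonneg.2 hx1), abs_of_nonneg (sub_nonneg.2 hx2)]
    have he : -(x - q) / b = (-1/b) * (x - q) := by ring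
    rw [he]
    ring
  constructor
  · exact hint.congr_fun hcongr measurableSet_Ioi
  · rw [← setIntegral_congr_fun measurableSet_Ioi hcongr, heq]
    rw [hcdef, hddef]
    field_simp
    ring

private lemma f_cont (b α q : ℝ) (hb : 0 < b) :
    Continuous (fun x : ℝ => max (x - α) 0 * (1 / (2 * b) * Real.exp (-|x - q| / b))) := by
  apply Continuous.mul
  · exact (continuous_id.sub continuous_const).max continuous_const
  · exact continuous_const.mul (Real.continuous_exp.comp (((continuous_id.sub continuous_const).abs.neg).div_const b))

private lemma mid_integral (b α q : ℝ) (hb : 0 < b) (hq : α ≤ q) :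
    ∫ x in Ioc α q, max (x - α) 0 * (1 / (2 * b) * Real.exp (-|x - q| / b))
      = 1 / (2 * b) * ((b * (q - α) - b ^ 2) + b ^ 2 * Real.exp ((1/b) * (α - q))) := by
  have hbne : b ≠ 0 := ne_of_gt hb
  set c : ℝ := 1/2 with hcdef
  set d : ℝ := -α / 2 - b / 2 with hddef
  have hval : ∀ x : ℝ, (c + (c * x + d) * (1/b)) = (x - α) / (2 * b) := by
    intro x
    rw [hcdef, hddef]
    field_simp
    ring
  have hderiv : ∀ x ∈ uIcc α q, HasDerivAt (fun x : ℝ => (c * x + d) * Real.exp ((1/b) * (x - q)))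
      (max (x - α) 0 * (1 / (2 * b) * Real.exp (-|x - q| / b))) x := by
    intro x hx
    rw [uIcc_of_le hq] at hx
    have h := hd_aux c d (1/b) q x
    have hx1 : α ≤ x := hx.1
    have hx2 : x ≤ q := hx.2
    have he1 : max (x - α) 0 * (1 / (2 * b) * Real.exp (-|x - q| / b))
        = (c + (c * x + d) * (1/b)) * Real.exp ((1/b) * (x - q)) := by
      rw [hval, max_eq_left (sub_nonneg.2 hx1), abs_of_nonpos (sub_nonpos.2 hx2)]
      have he : - -(x - q) / b = (1/b) * (x - q) := by ring
      rw [he]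
      ring
    rw [he1]
    exact h
  have hii : IntervalIntegrable
      (fun x : ℝ => max (x - α) 0 * (1 / (2 * b) * Real.exp (-|x - q| / b))) volume α q :=
    (f_cont b α q hb).intervalIntegrable α q
  have := intervalIntegral.integral_eq_sub_of_hasDerivAt hderiv hii
  rw [intervalIntegral.integral_of_le hq] at this
  rw [this]
  have he2 : (1/b) * (α - q) = (1/b) * (α - q) := rfl
  simp only [hcdef, hddef, sub_self, mul_zero, Real.exp_zero]
  field_simp
  ring

private lemma value_integral (b α q : ℝ) (hb : 0 < b) (hα : 0 ≤ α) :
    (∫ x : ℝ, max (x - α) 0 * (1 / (2 * b) * Real.exp (-|x - q| / b)))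
      = if q ≤ α then b / 2 * Real.exp ((q - α) / b)
        else (q - α) + b / 2 * Real.exp ((α - q) / b) := by
  have hbne : b ≠ 0 := ne_of_gt hb
  set f : ℝ → ℝ := fun x => max (x - α) 0 * (1 / (2 * b) * Real.exp (-|x - q| / b)) with hf
  have hIic0 : EqOn f (fun _ => (0:ℝ)) (Iic α) := by
    intro x hx
    simp only [hf]
    rw [max_eq_right (sub_nonpos.2 hx), zero_mul]
  have hIicInt : ∀ s : ℝ, s ≤ α → IntegrableOn f (Iic s) := by
    intro s hs
    have : EqOn (fun _ : ℝ => (0:ℝ)) f (Iic s) :=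
      fun x hx => ((hIic0 (mem_Iic.2 ((mem_Iic.1 hx).trans hs)))).symm
    exact (integrableOn_zero).congr_fun this measurableSet_Iic
  have hIicVal : ∫ x in Iic α, f x = 0 := by
    rw [setIntegral_congr_fun measurableSet_Iic hIic0, integral_zero]
  rcases le_or_gt q α with h | h
  · rw [if_pos h]
    obtain ⟨hint, hval⟩ := tail_integral b α q α hb le_rfl h
    rw [← intervalIntegral.integral_Iic_add_Ioi (hIicInt α le_rfl) hint, hIicVal, zero_add, hval]
    have he : (-1/b) * (α - q) = (q - α)/b := by ring
    rw [he]
    field_simp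
    ring
  · rw [if_neg (not_le.2 h)]
    obtain ⟨hintq, hvalq⟩ := tail_integral b α q q hb h.le le_rfl
    have hIocInt : IntegrableOn f (Ioc α q) := (f_cont b α q hb).integrableOn_Ioc
    have hIicqInt : IntegrableOn f (Iic q) := by
      rw [← Iic_union_Ioc_eq_Iic h.le]
      exact (hIicInt α le_rfl).union hIocInt
    rw [← intervalIntegral.integral_Iic_add_Ioi hIicqInt hintq]
    have hsplit : ∫ x in Iic q, f x = (∫ x in Iic α, f x) + ∫ x in Ioc α q, f x := by
      rw [← Iic_union_Ioc_eq_Iic h.le]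
      exact setIntegral_union (Iic_disjoint_Ioc le_rfl) measurableSet_Ioc
        (hIicInt α le_rfl) hIocInt
    rw [hsplit, hIicVal, zero_add, hvalq, mid_integral b α q hb h.le]
    have he1 : (1/b) * (α - q) = (α - q)/b := by ring
    have he2 : (-1/b) * (q - q) = (0:ℝ) := by ring
    rw [he1, he2, Real.exp_zero]
    field_simp
    ring

/-- The maximal absolute bias of the translated-ramp post-processed Laplace mechanism
equals `max{(b/2)e^{-α/b}, α}`. -/
theorem stmt_10 (b α : ℝ) (hb : 0 < b) (hα : 0 ≤ α) :
    sSup {r : ℝ | ∃ q : ℝ, 0 ≤ q ∧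
        r = |(∫ x : ℝ, max (x - α) 0 * (1 / (2 * b) * Real.exp (-|x - q| / b))) - q|}
      = max (b / 2 * Real.exp (-α / b)) α := by
  have hbne : b ≠ 0 := ne_of_gt hb
  set c : ℝ := b / 2 * Real.exp (-α / b) with hc
  set S : Set ℝ := {r : ℝ | ∃ q : ℝ, 0 ≤ q ∧
      r = |(∫ x : ℝ, max (x - α) 0 * (1 / (2 * b) * Real.exp (-|x - q| / b))) - q|} with hS
  have hexp1 : ∀ t : ℝ, 1 - Real.exp (-t) ≤ t := by
    intro t
    have := Real.add_one_le_exp (-t)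
    linarith
  have hexp2 : ∀ s : ℝ, b * (1 - Real.exp (-s / b)) ≤ s := by
    intro s
    have h1 : 1 - Real.exp (-(s / b)) ≤ s / b := hexp1 (s / b)
    rw [← neg_div] at h1
    have h2 := mul_le_mul_of_nonneg_left h1 hb.le
    calc b * (1 - Real.exp (-s / b)) ≤ b * (s / b) := h2
      _ = s := by field_simp
  -- upper bound
  have hub : ∀ r ∈ S, r ≤ max c α := by
    rintro r ⟨q, hq0, rfl⟩
    rw [value_integral b α q hb hα]
    rcases le_or_gt q α with h | h
    · rw [if_pos h, abs_le]
      set E1 := Real.exp ((q - α) / b) with hE1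
      have hE1pos : 0 < E1 := Real.exp_pos _
      constructor
      · have : α ≤ max c α := le_max_right c α
        nlinarith
      · have key : b / 2 * E1 - q ≤ c := by
          have e1 : E1 = Real.exp (-α / b) * Real.exp (q / b) := by
            rw [hE1, ← Real.exp_add]
            congr 1
            ring
          have e2 : Real.exp (-α / b) ≤ Real.exp (-q / b) := by
            apply Real.exp_le_exp.2
            gcongr <;> linarith
          have e3 : Real.exp (-q / b) * Real.exp (q / b) = 1 := by
            rw [← Real.exp_add]
            have : -q / b + q / b = 0 := by ring
            rw [this, Real.exp_zero]
          have e4 : (1:ℝ) ≤ Real.exp (q / b) := by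
            rw [← Real.exp_zero]
            exact Real.exp_le_exp.2 (by positivity)
          have e5 : b * (1 - Real.exp (-q / b)) ≤ q := hexp2 q
          have e6 : Real.exp (-α / b) * (Real.exp (q / b) - 1)
              ≤ Real.exp (-q / b) * (Real.exp (q / b) - 1) :=
            mul_le_mul_of_nonneg_right e2 (by linarith)
          rw [hc, e1]
          nlinarith
        exact key.trans (le_max_left c α)
    · rw [if_neg (not_le.2 h), abs_le]
      set E2 := Real.exp ((α - q) / b) with hE2
      have hE2pos : 0 < E2 := Real.exp_pos _
      have hE2le1 : E2 ≤ 1 := by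
        rw [hE2, ← Real.exp_zero]
        apply Real.exp_le_exp.2
        apply div_nonpos_of_nonpos_of_nonneg (by linarith) hb.le |>.trans_eq rfl
      have e5 : b * (1 - Real.exp (-α / b)) ≤ α := hexp2 α
      have hcpos : 0 ≤ c := by positivity
      constructor
      · have : α ≤ max c α := le_max_right c α
        nlinarith
      · have key : q - α + b / 2 * E2 - q ≤ c := by
          rw [hc]
          nlinarith
        exact key.trans (le_max_left c α)
  have hbdd : BddAbove S := ⟨max c α, hub⟩
  -- c is attained at q = 0
  have hc_mem : c ∈ S := by
    refine ⟨0, le_rfl, ?_⟩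
    rw [value_integral b α 0 hb hα, if_pos hα, sub_zero]
    have he : (0 - α) / b = -α / b := by ring
    rw [he, abs_of_nonneg (by positivity)]
  have hne : S.Nonempty := ⟨c, hc_mem⟩
  apply le_antisymm
  · exact csSup_le hne hub
  · apply max_le
    · exact le_csSup hbdd hc_mem
    · -- α ≤ sSup S
      apply le_of_forall_pos_le_add
      intro ε hε
      set M : ℝ := max 1 (Real.log (b / (2 * ε))) with hM
      set q : ℝ := α + b * M with hq
      have hM1 : (1:ℝ) ≤ M := le_max_left _ _
      have hqα : α < q := by
        have : 0 < b * M := by nlinarith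
        rw [hq]; linarith
      have hq0 : 0 ≤ q := le_trans hα hqα.le
      have hE2 : b / 2 * Real.exp ((α - q) / b) ≤ ε := by
        have he : (α - q) / b = -M := by
          rw [hq]; field_simp; ring
        rw [he]
        have h1 : Real.exp (-M) ≤ (b / (2 * ε))⁻¹ := by
          calc Real.exp (-M) ≤ Real.exp (-(Real.log (b / (2 * ε)))) :=
                Real.exp_le_exp.2 (neg_le_neg (le_max_right _ _))
            _ = (b / (2 * ε))⁻¹ := by
                rw [Real.exp_neg, Real.exp_log (by positivity : (0:ℝ) < b / (2 * ε))]
        calc b / 2 * Real.exp (-M) ≤ b / 2 * (b / (2 * ε))⁻¹ :=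
              mul_le_mul_of_nonneg_left h1 (by positivity)
          _ = ε := by field_simp
      have hmem : |(q - α + b / 2 * Real.exp ((α - q) / b)) - q| ∈ S := by
        refine ⟨q, hq0, ?_⟩
        rw [value_integral b α q hb hα, if_neg (not_le.2 hqα)]
      have hlow : α - ε ≤ |(q - α + b / 2 * Real.exp ((α - q) / b)) - q| := by
        have h1 : -((q - α + b / 2 * Real.exp ((α - q) / b)) - q)
            ≤ |(q - α + b / 2 * Real.exp ((α - q) / b)) - q| := neg_le_abs _
        have h2 : 0 < Real.exp ((α - q) / b) := Real.exp_pos _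
        linarith
      have := le_csSup hbdd hmem
      linarith
end

section
/- Fix b > 0 and let f_q(x) = (1/(2b))·e^{−|x−q|/b}. Let φ : ℝ → [0,∞) be measurable with ∫ φ(x)² e^{−|x|/b} dx < ∞, and define B(φ) = sup{ |∫ φ(x) f_q(x) dx − q| : q ∈ [0,∞) }. Then B(φ) > 0 (with B(φ) = ∞ when φ = 0 almost everywhere). -/
open MeasureTheory Real Set

lemma int_exp_abs {c : ℝ} (hc : 0 < c) :
    Integrable (fun x : ℝ => Real.exp (-(c * |x|))) := by
  rw [← integrableOn_univ, ← Iic_union_Ioi (a := (0:ℝ))]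
  have hIoi : IntegrableOn (fun x : ℝ => Real.exp (-(c * |x|))) (Ioi 0) := by
    refine (exp_neg_integrableOn_Ioi 0 hc).congr_fun (fun x hx => ?_) measurableSet_Ioi
    rw [abs_of_pos hx]; ring_nf
  refine IntegrableOn.union ?_ hIoi
  have : IntegrableOn (fun x : ℝ => Real.exp (-(c * |(-x)|))) (Ici (0:ℝ)) := by
    simp only [abs_neg]
    exact Iff.mpr integrableOn_Ici_iff_integrableOn_Ioi hIoi
  have m : MeasurableEmbedding (Neg.neg : ℝ → ℝ) := (Homeomorph.neg ℝ).measurableEmbedding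
  rw [← Measure.map_neg_eq_self (volume : Measure ℝ),
    m.integrableOn_map_iff]
  simpa [Function.comp_def, neg_preimage, neg_Iic] using this

/-- The maximal absolute bias of any nonnegative post-processed Laplace mechanism is
strictly positive (it is `∞` when `φ = 0` a.e.). -/
theorem stmt_14 (b : ℝ) (hb : 0 < b) (φ : ℝ → ℝ) (hφ : Measurable φ)
    (hpos : ∀ x, 0 ≤ φ x)
    (h2 : Integrable (fun x : ℝ => φ x ^ 2 * Real.exp (-|x| / b))) :
    0 < ⨆ (q : ℝ) (_ : 0 ≤ q),
        ENNReal.ofReal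
          |(∫ x : ℝ, φ x * (1 / (2 * b) * Real.exp (-|x - q| / b))) - q| := by
  have hexp : Integrable (fun x : ℝ => Real.exp (-|x| / b)) := by
    have h := int_exp_abs (c := 1 / b) (by positivity)
    refine h.congr (Filter.Eventually.of_forall fun x => ?_)
    show rexp (-(1 / b * |x|)) = rexp (-|x| / b)
    congr 1
    ring
  have hint : ∀ q : ℝ,
      Integrable (fun x => φ x * (1 / (2 * b) * Real.exp (-|x - q| / b))) := by
    intro q
    have hmeas : AEStronglyMeasurable
        (fun x => φ x * (1 / (2 * b) * Real.exp (-|x - q| / b))) volume := by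
      refine (hφ.mul (measurable_const.mul ?_)).aestronglyMeasurable
      exact (((measurable_id.sub measurable_const).abs.neg.div_const b).exp)
    have hbound : Integrable (fun x : ℝ =>
        Real.exp (|q| / b) / (4 * b) *
          (Real.exp (-|x| / b) + φ x ^ 2 * Real.exp (-|x| / b))) :=
      (hexp.add h2).const_mul _
    refine hbound.mono' hmeas (Filter.Eventually.of_forall fun x => ?_)
    have he1 : Real.exp (-|x - q| / b) ≤ Real.exp (|q| / b) * Real.exp (-|x| / b) := by
      rw [← Real.exp_add]
      apply Real.exp_le_exp.mpr
      rw [← add_div, div_le_div_iff_of_pos_right hb] at *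
      · have : |x| - |q| ≤ |x - q| := abs_sub_abs_le_abs_sub x q
        linarith
    have hφle : φ x ≤ (1 + φ x ^ 2) / 2 := by nlinarith [sq_nonneg (φ x - 1)]
    have hnn : 0 ≤ φ x * (1 / (2 * b) * Real.exp (-|x - q| / b)) :=
      mul_nonneg (hpos x) (by positivity)
    rw [Real.norm_eq_abs, abs_of_nonneg hnn]
    calc φ x * (1 / (2 * b) * Real.exp (-|x - q| / b))
        ≤ φ x * (1 / (2 * b) * (Real.exp (|q| / b) * Real.exp (-|x| / b))) := by
          gcongr
          exact hpos x
      _ ≤ (1 + φ x ^ 2) / 2 * (1 / (2 * b) * (Real.exp (|q| / b) * Real.exp (-|x| / b))) := by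
          gcongr
      _ = Real.exp (|q| / b) / (4 * b) *
          (Real.exp (-|x| / b) + φ x ^ 2 * Real.exp (-|x| / b)) := by
          field_simp; ring
  have hnn0 : 0 ≤ ∫ x : ℝ, φ x * (1 / (2 * b) * Real.exp (-|x - 0| / b)) :=
    integral_nonneg fun x => mul_nonneg (hpos x) (by positivity)
  rcases hnn0.eq_or_lt with h0 | h0
  · -- integral at q = 0 vanishes, hence φ = 0 a.e., use q = 1
    have hzero : (fun x => φ x * (1 / (2 * b) * Real.exp (-|x - 0| / b))) =ᵐ[volume] 0 :=
      (integral_eq_zero_iff_of_nonneg (fun x => mul_nonneg (hpos x) (by positivity)) (hint 0)).mp h0.symm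
    have hφ0 : ∀ᵐ x : ℝ, φ x = 0 := by
      refine hzero.mono fun x hx => ?_
      have hp : (0:ℝ) < 1 / (2 * b) * Real.exp (-|x - 0| / b) := by positivity
      have := mul_eq_zero.mp hx
      rcases this with h | h
      · exact h
      · exact absurd h hp.ne'
    have h1 : (fun x => φ x * (1 / (2 * b) * Real.exp (-|x - 1| / b))) =ᵐ[volume] 0 :=
      hφ0.mono fun x hx => by simp [hx]
    have hI1 : (∫ x : ℝ, φ x * (1 / (2 * b) * Real.exp (-|x - 1| / b))) = 0 :=
      integral_eq_zero_of_ae h1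
    refine lt_of_lt_of_le ?_
      (le_iSup₂ (f := fun q (_ : (0:ℝ) ≤ q) => ENNReal.ofReal
        |(∫ x : ℝ, φ x * (1 / (2 * b) * Real.exp (-|x - q| / b))) - q|) 1 zero_le_one)
    rw [hI1]
    norm_num
  · refine lt_of_lt_of_le ?_
      (le_iSup₂ (f := fun q (_ : (0:ℝ) ≤ q) => ENNReal.ofReal
        |(∫ x : ℝ, φ x * (1 / (2 * b) * Real.exp (-|x - q| / b))) - q|) 0 le_rfl)
    rw [ENNReal.ofReal_pos, sub_zero]
    exact abs_pos.mpr h0.ne'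
end

section
/- Fix b > 0 and let f_q(x) = (1/(2b))·e^{−|x−q|/b}. For measurable nonnegative φ with ∫ φ² e^{−|x|/b} dx < ∞, let B(φ) = sup_{q ≥ 0} |∫ φ f_q dx − q|. Then inf{B(φ) : φ ∈ V₊} > 0, where V₊ is the set of all such nonnegative φ. In other words, the worst-case absolute bias of nonnegative post-processed Laplace mechanisms is uniformly bounded away from zero. -/
open MeasureTheory Real

/-- The worst-case absolute bias of nonnegative post-processed Laplace mechanisms is
uniformly bounded away from zero. -/
theorem stmt_15 (b : ℝ) (hb : 0 < b) :
    0 < ⨅ φ : {φ : ℝ → ℝ // Measurable φ ∧ (∀ x, 0 ≤ φ x) ∧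
          Integrable (fun x : ℝ => |φ x| ^ 2 * Real.exp (-|x| / b))},
        ⨆ (q : ℝ) (_ : 0 ≤ q),
          ENNReal.ofReal
            |(∫ x : ℝ, (φ : ℝ → ℝ) x * (1 / (2 * b) * Real.exp (-|x - q| / b))) - q| := by
  set c : ℝ := b / (1 + Real.exp 1) with hc
  have he : (0:ℝ) < 1 + Real.exp 1 := by positivity
  have hc0 : 0 < c := div_pos hb he
  have hcb : c ≤ b := by
    rw [hc, div_le_iff₀ he]
    nlinarith [Real.exp_pos 1]
  refine lt_of_lt_of_le (show (0:ENNReal) < ENNReal.ofReal c from ENNReal.ofReal_pos.2 hc0)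
    (le_iInf ?_)
  rintro ⟨φ, hφm, hφ0, hφint⟩
  have key : ∃ q, 0 ≤ q ∧
      c ≤ |(∫ x : ℝ, φ x * (1 / (2 * b) * Real.exp (-|x - q| / b))) - q| := by
    by_cases hI : Integrable (fun x : ℝ => φ x * (1 / (2 * b) * Real.exp (-|x - b| / b)))
    · -- integrable at q = b, hence also at q = 0
      have hmeas0 : AEStronglyMeasurable
          (fun x : ℝ => φ x * (1 / (2 * b) * Real.exp (-|x - 0| / b))) volume := by
        apply Measurable.aestronglyMeasurable
        exact hφm.mul (by fun_prop)
      have hptw : ∀ x : ℝ, φ x * (1 / (2 * b) * Real.exp (-|x - 0| / b)) ≤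
          Real.exp 1 * (φ x * (1 / (2 * b) * Real.exp (-|x - b| / b))) := by
        intro x
        have h1 : |x - b| - |x - 0| ≤ b := by
          have := abs_sub_abs_le_abs_sub (x - b) (x - 0)
          have : |x - b| - |x - 0| ≤ |(x - b) - (x - 0)| := this
          simp at this
          simpa [abs_of_pos hb] using this
        have h2 : Real.exp (-|x - 0| / b) ≤ Real.exp 1 * Real.exp (-|x - b| / b) := by
          rw [← Real.exp_add]
          apply Real.exp_le_exp.2
          rw [div_le_iff₀ hb, add_mul, one_mul, neg_div, neg_mul,
            div_mul_cancel₀ _ hb.ne']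
          linarith
        calc φ x * (1 / (2 * b) * Real.exp (-|x - 0| / b))
            ≤ φ x * (1 / (2 * b) * (Real.exp 1 * Real.exp (-|x - b| / b))) := by
              apply mul_le_mul_of_nonneg_left _ (hφ0 x)
              apply mul_le_mul_of_nonneg_left h2 (by positivity)
          _ = Real.exp 1 * (φ x * (1 / (2 * b) * Real.exp (-|x - b| / b))) := by ring
      have h0int : Integrable
          (fun x : ℝ => φ x * (1 / (2 * b) * Real.exp (-|x - 0| / b))) := by
        refine (hI.const_mul (Real.exp 1)).mono' hmeas0 ?_
        filter_upwards with x
        rw [Real.norm_eq_abs, abs_of_nonneg (mul_nonneg (hφ0 x) (by positivity))]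
        · exact hptw x
      set M : ℝ := ∫ x : ℝ, φ x * (1 / (2 * b) * Real.exp (-|x - 0| / b)) with hM
      have hM0 : 0 ≤ M := integral_nonneg fun x => mul_nonneg (hφ0 x) (by positivity)
      by_cases hMc : c ≤ M
      · exact ⟨0, le_refl 0, by rw [sub_zero, abs_of_nonneg hM0]; exact hMc⟩
      · push_neg at hMc
        refine ⟨b, hb.le, ?_⟩
        have hIb : (∫ x : ℝ, φ x * (1 / (2 * b) * Real.exp (-|x - b| / b)))
            ≤ Real.exp 1 * M := by
          have hptw' : ∀ x : ℝ, φ x * (1 / (2 * b) * Real.exp (-|x - b| / b)) ≤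
              Real.exp 1 * (φ x * (1 / (2 * b) * Real.exp (-|x - 0| / b))) := by
            intro x
            have h1 : |x - 0| - |x - b| ≤ b := by
              have := abs_sub_abs_le_abs_sub (x - 0) (x - b)
              simp at this
              simpa [abs_of_pos hb] using this
            have h2 : Real.exp (-|x - b| / b) ≤ Real.exp 1 * Real.exp (-|x - 0| / b) := by
              rw [← Real.exp_add]
              apply Real.exp_le_exp.2
              rw [div_le_iff₀ hb, add_mul, one_mul, neg_div, neg_mul,
                div_mul_cancel₀ _ hb.ne']
              linarith
            calc φ x * (1 / (2 * b) * Real.exp (-|x - b| / b))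
                ≤ φ x * (1 / (2 * b) * (Real.exp 1 * Real.exp (-|x - 0| / b))) := by
                  apply mul_le_mul_of_nonneg_left _ (hφ0 x)
                  apply mul_le_mul_of_nonneg_left h2 (by positivity)
              _ = Real.exp 1 * (φ x * (1 / (2 * b) * Real.exp (-|x - 0| / b))) := by ring
          calc (∫ x : ℝ, φ x * (1 / (2 * b) * Real.exp (-|x - b| / b)))
              ≤ ∫ x : ℝ, Real.exp 1 * (φ x * (1 / (2 * b) * Real.exp (-|x - 0| / b))) :=
                integral_mono hI (h0int.const_mul _) hptw'
            _ = Real.exp 1 * M := by rw [integral_const_mul]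
        have hb' : (∫ x : ℝ, φ x * (1 / (2 * b) * Real.exp (-|x - b| / b))) - b
            ≤ -c := by
          have : Real.exp 1 * M ≤ Real.exp 1 * c :=
            mul_le_mul_of_nonneg_left hMc.le (Real.exp_pos 1).le
          have hcc : Real.exp 1 * c = b - c := by
            field_simp [hc]
            have : (1 + Real.exp 1) * c = b := by rw [hc]; field_simp
            linarith
          linarith
        calc c ≤ |-((∫ x : ℝ, φ x * (1 / (2 * b) * Real.exp (-|x - b| / b))) - b)| := by
              rw [abs_neg]
              refine le_trans ?_ (neg_le_abs _)
              linarith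
          _ = _ := by rw [abs_neg]
    · refine ⟨b, hb.le, ?_⟩
      rw [integral_undef hI, zero_sub, abs_neg, abs_of_pos hb]
      exact hcb
  obtain ⟨q, hq, hineq⟩ := key
  calc ENNReal.ofReal c
      ≤ ENNReal.ofReal |(∫ x : ℝ, φ x * (1 / (2 * b) * Real.exp (-|x - q| / b))) - q| :=
        ENNReal.ofReal_le_ofReal hineq
    _ ≤ _ := le_iSup₂ (f := fun (q : ℝ) (_ : 0 ≤ q) =>
        ENNReal.ofReal |(∫ x : ℝ, φ x * (1 / (2 * b) * Real.exp (-|x - q| / b))) - q|) q hq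
end
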